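/- Let V : L^1([0,1]) → C([0,1]) be the Volterra operator. Then the essential norm of V equals 1/2, i.e. inf{‖V − S‖ : S : L^1([0,1]) → C([0,1]) a compact bounded linear operator} = 1/2. -/

import Mathlib

open MeasureTheory Set

noncomputable def mu01 : Measure ℝ := volume.restrict (Icc (0:ℝ) 1)

/-!
Upper bound: the rank-one, hence compact, operator `S f = ½ ∫ f` gives
`(V - S) f (x) = ½ (∫_(0,x] f - ∫_(x,1] f)`, whose sup norm is at most `½ ‖f‖₁`.

Lower bound: the unit-mass bumps `u_n = (n+1) 𝟙_(0,1/(n+1)]` satisfy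
`V u_n (1/(n+1)) - V u_n (0) = 1`. If `S` is compact, a subsequence of `S u_n` converges
uniformly, so the oscillation of `S u_n` between these two points tends to `0`, and
`1 ≤ 2 ‖V - S‖` follows.
-/

open Filter Topology

theorem ContinuousLinearMap.isCompactOperator_smulRight {𝕜 E F : Type*} [NontriviallyNormedField 𝕜]
    [LocallyCompactSpace 𝕜] [NormedAddCommGroup E] [NormedSpace 𝕜 E] [NormedAddCommGroup F]
    [NormedSpace 𝕜 F] (φ : E →L[𝕜] 𝕜) (y : F) : IsCompactOperator (φ.smulRight y) :=
  (isCompactOperator_of_locallyCompactSpace_dom φ).clm_comp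
    ((ContinuousLinearMap.id 𝕜 𝕜).smulRight y)

theorem norm_setIntegral_sub_half_integral_le {α E : Type*} [MeasurableSpace α]
    [NormedAddCommGroup E] [NormedSpace ℝ E] {μ : Measure α} {f : α → E} (hf : Integrable f μ)
    {s : Set α} (hs : MeasurableSet s) :
    ‖∫ a in s, f a ∂μ - (2:ℝ)⁻¹ • ∫ a, f a ∂μ‖ ≤ 2⁻¹ * ∫ a, ‖f a‖ ∂μ := by
  rw [← integral_add_compl hs hf, ← integral_add_compl hs hf.norm]
  calc ‖∫ a in s, f a ∂μ - (2:ℝ)⁻¹ • (∫ a in s, f a ∂μ + ∫ a in sᶜ, f a ∂μ)‖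
      = 2⁻¹ * ‖∫ a in s, f a ∂μ - ∫ a in sᶜ, f a ∂μ‖ := by
        rw [← norm_smul_of_nonneg (by norm_num : (0:ℝ) ≤ 2⁻¹)]
        congr 1
        module
    _ ≤ 2⁻¹ * (‖∫ a in s, f a ∂μ‖ + ‖∫ a in sᶜ, f a ∂μ‖) := by gcongr; exact norm_sub_le _ _
    _ ≤ 2⁻¹ * (∫ a in s, ‖f a‖ ∂μ + ∫ a in sᶜ, ‖f a‖ ∂μ) := by
        gcongr <;> exact norm_integral_le_integral_norm _

theorem ContinuousLinearMap.one_half_le_norm_sub_of_isCompactOperator {E X : Type*}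
    [NormedAddCommGroup E] [NormedSpace ℝ E] [TopologicalSpace X] [CompactSpace X]
    {T S : E →L[ℝ] C(X, ℝ)} (hS : IsCompactOperator S) {u : ℕ → E} (hu : ∀ n, ‖u n‖ ≤ 1)
    {x : ℕ → X} {x₀ : X} (hx : Tendsto x atTop (𝓝 x₀))
    (hT : ∀ n, T (u n) (x n) - T (u n) x₀ = 1) :
    1 / 2 ≤ ‖T - S‖ := by
  obtain ⟨y, -, φ, hφ, hSu⟩ := (hS.isCompact_closure_image_closedBall 1).tendsto_subseq
    fun n => subset_closure (mem_image_of_mem S (mem_closedBall_zero_iff.mpr (hu n)))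
  have hosc : Tendsto (fun j => S (u (φ j)) (x (φ j)) - S (u (φ j)) x₀) atTop
      (𝓝 (y x₀ - y x₀)) :=
    ((continuous_eval.tendsto (y, x₀)).comp (hSu.prodMk_nhds (hx.comp hφ.tendsto_atTop))).sub
      ((continuous_eval_const x₀).tendsto y |>.comp hSu)
  have hbound : ∀ n, 1 ≤ 2 * ‖T - S‖ + (S (u n) (x n) - S (u n) x₀) := by
    intro n
    have hev : ∀ p, |(T - S) (u n) p| ≤ ‖T - S‖ := fun p =>
      ((T - S) (u n)).norm_coe_le_norm p |>.trans
        ((T - S).le_opNorm_of_le (hu n) |>.trans_eq (mul_one _))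
    have hTn := hT n
    simp only [sub_apply, ContinuousMap.sub_apply] at hev
    linarith [abs_le.mp (hev (x n)), abs_le.mp (hev x₀)]
  have hlim := ge_of_tendsto (tendsto_const_nhds.add hosc)
    (Eventually.of_forall fun j => hbound (φ j))
  rw [sub_self, add_zero] at hlim
  linarith

instance : IsFiniteMeasure mu01 := Real.isFiniteMeasure_restrict_Icc 0 1

lemma mu01_real_Ioc {a : ℝ} (ha₀ : 0 ≤ a) (ha₁ : a ≤ 1) : mu01.real (Ioc 0 a) = a := by
  rw [mu01, measureReal_restrict_apply measurableSet_Ioc,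
    inter_eq_left.mpr (Ioc_subset_Icc_self.trans (Icc_subset_Icc le_rfl ha₁)),
    Real.volume_real_Ioc_of_le ha₀, sub_zero]

noncomputable def bump (a : ℝ) : Lp ℝ 1 mu01 :=
  indicatorConstLp 1 measurableSet_Ioc (measure_ne_top mu01 (Ioc 0 a)) a⁻¹

lemma norm_bump {a : ℝ} (ha₀ : 0 < a) (ha₁ : a ≤ 1) : ‖bump a‖ = 1 := by
  rw [bump, norm_indicatorConstLp one_ne_zero ENNReal.one_ne_top, mu01_real_Ioc ha₀.le ha₁]
  simp [abs_of_pos ha₀, ha₀.ne']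

lemma setIntegral_bump_Ioc_self {a : ℝ} (ha₀ : 0 < a) (ha₁ : a ≤ 1) :
    ∫ t in Ioc 0 a, (bump a : ℝ → ℝ) t ∂mu01 = 1 := by
  rw [bump, setIntegral_indicatorConstLp measurableSet_Ioc, inter_self, mu01_real_Ioc ha₀.le ha₁,
    smul_eq_mul, mul_inv_cancel₀ ha₀.ne']

noncomputable def halfMean : Lp ℝ 1 mu01 →L[ℝ] C(Icc (0:ℝ) 1, ℝ) :=
  L1.integralCLM.smulRight (ContinuousMap.const _ 2⁻¹)

lemma halfMean_apply (f : Lp ℝ 1 mu01) (x : Icc (0:ℝ) 1) :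
    halfMean f x = (2:ℝ)⁻¹ • ∫ t, (f : ℝ → ℝ) t ∂mu01 := by
  simp [halfMean, ← L1.integral_def, L1.integral_eq_integral, mul_comm]

lemma norm_volterra_sub_halfMean_le (V : Lp ℝ 1 mu01 →L[ℝ] C(Icc (0:ℝ) 1, ℝ))
    (hV : ∀ (f : Lp ℝ 1 mu01) (x : Icc (0:ℝ) 1),
      V f x = ∫ t in Ioc (0:ℝ) (x:ℝ), (f : ℝ → ℝ) t ∂mu01) :
    ‖V - halfMean‖ ≤ 1 / 2 := by
  refine ContinuousLinearMap.opNorm_le_bound _ (by norm_num) fun f => ?_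
  refine (ContinuousMap.norm_le _ (by positivity)).mpr fun x => ?_
  rw [sub_apply, ContinuousMap.sub_apply, hV, halfMean_apply,
    L1.norm_eq_integral_norm, one_div]
  exact norm_setIntegral_sub_half_integral_le (L1.integrable_coeFn f) measurableSet_Ioc

lemma one_half_le_norm_volterra_sub (V : Lp ℝ 1 mu01 →L[ℝ] C(Icc (0:ℝ) 1, ℝ))
    (hV : ∀ (f : Lp ℝ 1 mu01) (x : Icc (0:ℝ) 1),
      V f x = ∫ t in Ioc (0:ℝ) (x:ℝ), (f : ℝ → ℝ) t ∂mu01)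
    {S : Lp ℝ 1 mu01 →L[ℝ] C(Icc (0:ℝ) 1, ℝ)} (hS : IsCompactOperator S) :
    1 / 2 ≤ ‖V - S‖ := by
  have ha₀ (n : ℕ) : (0:ℝ) < ((n:ℝ) + 1)⁻¹ := by positivity
  have ha₁ (n : ℕ) : ((n:ℝ) + 1)⁻¹ ≤ 1 := inv_le_one_of_one_le₀ (by simp)
  let x (n : ℕ) : Icc (0:ℝ) 1 := ⟨(n + 1)⁻¹, (ha₀ n).le, ha₁ n⟩
  have hx : Tendsto x atTop (𝓝 ⊥) := by
    rw [tendsto_subtype_rng]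
    simpa [x] using tendsto_one_div_add_atTop_nhds_zero_nat (𝕜 := ℝ)
  refine ContinuousLinearMap.one_half_le_norm_sub_of_isCompactOperator hS
    (fun n => (norm_bump (ha₀ n) (ha₁ n)).le) hx fun n => ?_
  rw [hV, hV]
  simp [x, setIntegral_bump_Ioc_self (ha₀ n) (ha₁ n)]

theorem volterra_essentialNorm_eq_half
    (V : Lp ℝ 1 mu01 →L[ℝ] C(Icc (0:ℝ) 1, ℝ))
    (hV : ∀ (f : Lp ℝ 1 mu01) (x : Icc (0:ℝ) 1),
      V f x = ∫ t in Ioc (0:ℝ) (x:ℝ), (f : ℝ → ℝ) t ∂mu01) :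
    sInf {c : ℝ | ∃ S : Lp ℝ 1 mu01 →L[ℝ] C(Icc (0:ℝ) 1, ℝ),
      IsCompactOperator ⇑S ∧ c = ‖V - S‖} = 1/2 := by
  have hcompact : IsCompactOperator halfMean :=
    ContinuousLinearMap.isCompactOperator_smulRight _ _
  refine IsLeast.csInf_eq ⟨⟨halfMean, hcompact, ?_⟩, ?_⟩
  · exact le_antisymm (one_half_le_norm_volterra_sub V hV hcompact)
      (norm_volterra_sub_halfMean_le V hV)
  · rintro _ ⟨S, hS, rfl⟩
    exact one_half_le_norm_volterra_sub V hV hS
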